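/- arXiv:2311.15524 — 2 statements merged into one kernel-verified Lean document; each statement's English description precedes it below -/
import Mathlib

section
/- Suppose the twisted K-energy φ ↦ K_{ω_i}(φ) + (1/τ)(I_{ω_i} − J_{ω_i})(φ) admits a minimizer ω_{i+1} (with K^{(ω_i/τ)}_{ω_i}(ω_{i+1}) ≤ 0 = K^{(ω_i/τ)}_{ω_i}(ω_i)). Then along the Ricci iteration, the K-energy is monotone: K_ω(ω_{i+1}) − K_ω(ω_i) ≤ −(1/τ)(I_{ω_i} − J_{ω_i})(ω_{i+1}) ≤ 0. -/
/- STATEMENT 12: Suppose the twisted K-energy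
φ ↦ K_{ω_i}(φ) + (1/τ)(I_{ω_i} − J_{ω_i})(φ) admits ω_{i+1} as a minimizer
(so K^{(ω_i/τ)}_{ω_i}(ω_{i+1}) ≤ 0 = K^{(ω_i/τ)}_{ω_i}(ω_i)).  Then along the
Ricci iteration the K-energy is monotone:
K_ω(ω_{i+1}) − K_ω(ω_i) ≤ −(1/τ)(I_{ω_i} − J_{ω_i})(ω_{i+1}) ≤ 0.

Abstract model: `M` is the set of Kähler forms in the class {ω}, `K a b` is the
K-energy K_a(b) (satisfying the cocycle relation
K_ω(ω_{i+1}) − K_ω(ω_i) = K_{ω_i}(ω_{i+1})), `IJ a b` = (I_a − J_a)(b) ≥ 0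
(Tian's inequality), τ > 0, and ω : ℕ → M is the Ricci iteration sequence with
ω 0 = ω. -/
theorem kenergy_monotone_along_iteration
    {M : Type*} (K IJ : M → M → ℝ)
    (τ : ℝ) (hτ : 0 < τ)
    (ω : ℕ → M)
    (hKcocycle : ∀ a b c, K a b + K b c = K a c)
    (hIJnonneg : ∀ a b, 0 ≤ IJ a b)
    -- ω_{i+1} minimizes the twisted K-energy, whose value at ω_i is 0
    (hmin : ∀ i, K (ω i) (ω (i + 1)) + (1 / τ) * IJ (ω i) (ω (i + 1)) ≤ 0) :
    ∀ i, K (ω 0) (ω (i + 1)) - K (ω 0) (ω i) ≤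
        -(1 / τ) * IJ (ω i) (ω (i + 1)) ∧
      -(1 / τ) * IJ (ω i) (ω (i + 1)) ≤ 0 := by
  intro i
  have hc := hKcocycle (ω 0) (ω i) (ω (i + 1))
  have hm := hmin i
  have hij := hIJnonneg (ω i) (ω (i + 1))
  have hpos : 0 ≤ (1 / τ) * IJ (ω i) (ω (i + 1)) := by positivity
  exact ⟨by linarith, by linarith⟩
end

section
/- In the Ricci iteration with τ = 1, if the K-energy is proper (K_ω(φ) ≥ γ(I_ω−J_ω)(φ) − C_0 for some γ > 0), then one has J(u_{i+1}, u_i) ≤ K_ω(u_i) − K_ω(u_{i+1}) for all i; consequently, since {K_ω(u_i)} is decreasing and bounded below, I(u_{i+1}, u_i) → 0 as i → ∞. -/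
open Filter Topology

/- STATEMENT 18: In the Ricci iteration with τ = 1, if the K-energy is proper
(K_ω(φ) ≥ γ(I_ω−J_ω)(φ) − C_0 for some γ > 0), then
J(u_{i+1}, u_i) ≤ K_ω(u_i) − K_ω(u_{i+1}) for all i; consequently, since
{K_ω(u_i)} is decreasing and bounded below, I(u_{i+1}, u_i) → 0 as i → ∞.

Abstract model: `H` is the space of (normalized) Kähler potentials,
`K = K_ω : H → ℝ` the K-energy, `IJ φ = (I_ω−J_ω)(φ) ≥ 0`, `I J : H → H → ℝ`
the relative energies with 0 ≤ I ≤ (n+1)J, `Jtw i` the twisted functional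
J^{ω_{u_i}}_ω, and u : ℕ → H the iteration, where u_{i+1} minimizes
K + Jtw i over H and the cocycle relation gives
Jtw i (u_{i+1}) − Jtw i (u_i) = J(u_{i+1}, u_i). -/
theorem J_differences_summable_and_I_tendsto_zero
    {H : Type*} (K : H → ℝ) (IJ : H → ℝ) (I J : H → H → ℝ)
    (Jtw : ℕ → H → ℝ) (n : ℕ) (hn : 0 < n)
    (γ C0 : ℝ) (hγ : 0 < γ)
    (hproper : ∀ φ, K φ ≥ γ * IJ φ - C0)
    (hIJnonneg : ∀ φ, 0 ≤ IJ φ)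
    (u : ℕ → H)
    -- u_{i+1} minimizes K + J^{ω_{u_i}}
    (hmin : ∀ i φ, K (u (i + 1)) + Jtw i (u (i + 1)) ≤ K φ + Jtw i φ)
    -- cocycle relation for the twisted functional
    (hcocycle : ∀ i, Jtw i (u (i + 1)) - Jtw i (u i) = J (u (i + 1)) (u i))
    (hI_nonneg : ∀ a b, 0 ≤ I a b)
    (hJ_nonneg : ∀ a b, 0 ≤ J a b)
    -- comparison I ≤ (n+1) J
    (hIJ_comp : ∀ a b, I a b ≤ (n + 1) * J a b) :
    (∀ i, J (u (i + 1)) (u i) ≤ K (u i) - K (u (i + 1))) ∧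
      Tendsto (fun i => I (u (i + 1)) (u i)) atTop (nhds 0) := by
  have hJK : ∀ i, J (u (i + 1)) (u i) ≤ K (u i) - K (u (i + 1)) := by
    intro i
    have h := hmin i (u i)
    have hc := hcocycle i
    linarith
  refine ⟨hJK, ?_⟩
  set a : ℕ → ℝ := fun i => K (u i) with ha
  have hanti : Antitone a := antitone_nat_of_succ_le (fun i => by
    have h1 := hJK i
    have h2 := hJ_nonneg (u (i + 1)) (u i)
    simp only [ha]
    linarith)
  have hbdd : ∀ i, -C0 ≤ a i := by
    intro i
    have h1 := hproper (u i)
    have h2 : 0 ≤ γ * IJ (u i) := mul_nonneg hγ.le (hIJnonneg (u i))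
    simp only [ha]
    linarith
  have hL : Tendsto a atTop (nhds (⨅ i, a i)) :=
    tendsto_atTop_ciInf hanti ⟨-C0, by rintro x ⟨i, rfl⟩; exact hbdd i⟩
  have hL' : Tendsto (fun i => a (i + 1)) atTop (nhds (⨅ i, a i)) :=
    hL.comp (tendsto_add_atTop_nat 1)
  have hdiff : Tendsto (fun i => a i - a (i + 1)) atTop (nhds 0) := by
    simpa using hL.sub hL'
  have hg : Tendsto (fun i => ((n : ℝ) + 1) * (a i - a (i + 1))) atTop (nhds 0) := by
    simpa using hdiff.const_mul ((n : ℝ) + 1)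
  refine squeeze_zero (fun i => hI_nonneg _ _) (fun i => ?_) hg
  calc I (u (i + 1)) (u i) ≤ ((n : ℝ) + 1) * J (u (i + 1)) (u i) := hIJ_comp _ _
    _ ≤ ((n : ℝ) + 1) * (a i - a (i + 1)) :=
      mul_le_mul_of_nonneg_left (hJK i) (by positivity)
end
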